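/- arXiv:2209.01708 — 5 statements merged into one kernel-verified Lean document; each statement's English description precedes it below -/
import Mathlib

section
/- Let a(t,x,ξ) be a smooth real-valued function defined on a neighborhood of ρ' = (0,x₀,ξ₀) ∈ ℝ × ℝ^d × ℝ^d, with a(ρ') = 0 and all first-order partial derivatives of a vanishing at ρ', and suppose a(t,x,ξ) ≥ 0 whenever 0 ≤ t < δ and (x,ξ) is near (x₀,ξ₀), for some δ > 0. Let Q(t,x,ξ) denote the quadratic part of a at ρ', i.e. Q(v) = (1/2)⟨v, (Hess a)(ρ') v⟩ for v = (t,x,ξ). Let φ(x,ξ) be a smooth real-valued function near (x₀,ξ₀) and let 0 < κ < 1 be such that {φ,a}(t,x,ξ)² ≤ 4κ·a(t,x,ξ) for all 0 ≤ t < δ and (x,ξ) near (x₀,ξ₀). Then Q(0, ∇_ξφ(x₀,ξ₀), −∇_xφ(x₀,ξ₀)) < 1; equivalently, the function f(t,x,ξ) = t − φ(x,ξ) is a time function for p = −τ² + Q at ρ = (0,x₀,0,ξ₀), meaning p_ρ(−H_f(ρ')) < 0 where p_ρ(t,x,τ,ξ) = −τ² + Q(t,x,ξ) and H_f = (0, −∂φ/∂ξ,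 −1, ∂φ/∂x) is the Hamilton vector field of f in the coordinates (t,x,τ,ξ). -/
/-!
Let `v = H_φ(ρ')`, with zero `t`-component, and `L = D²a(ρ')(v, v) = 2 Q(v)`. Along the ray
`s ↦ ρ' + s v`, `s > 0`, the bracket `{φ, a} = da(H_φ)` is `s L + o(s)`, because `da(ρ') = 0` and
`H_φ` is continuous, while `a = s² L / 2 + o(s²)`. Dividing `{φ, a}² ≤ 4 κ a` by `s²` and letting
`s → 0⁺` gives `L² ≤ 2 κ L`, so `Q(v) = L / 2 ≤ κ < 1`.
-/

open Filter Topology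

section SecondOrder

variable {E : Type*} [NormedAddCommGroup E] [NormedSpace ℝ E] {f : E → ℝ} {x₀ v : E}

theorem fderiv_apply_const_eq_flip {F G : Type*} [NormedAddCommGroup F] [NormedSpace ℝ F]
    [NormedAddCommGroup G] [NormedSpace ℝ G] {c : E → F →L[ℝ] G} (hc : DifferentiableAt ℝ c x₀) (u : F) :
    fderiv ℝ (fun y => c y u) x₀ = (fderiv ℝ c x₀).flip u := by
  simp [fderiv_clm_apply hc (differentiableAt_const u)]

theorem tendsto_inv_smul_fderiv_add_smul (hf : DifferentiableAt ℝ (fderiv ℝ f) x₀)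
    (hdf : fderiv ℝ f x₀ = 0) :
    Tendsto (fun s : ℝ => s⁻¹ • fderiv ℝ f (x₀ + s • v)) (𝓝[>] 0)
      (𝓝 (fderiv ℝ (fderiv ℝ f) x₀ v)) := by
  simpa [hdf] using (hf.hasFDerivAt.hasLineDerivAt v).tendsto_slope_zero_right

theorem tendsto_apply_add_smul_div_sq (hf : ContDiffAt ℝ 2 f x₀) (hf0 : f x₀ = 0)
    (hdf : fderiv ℝ f x₀ = 0) :
    Tendsto (fun s : ℝ => f (x₀ + s • v) / s ^ 2) (𝓝[>] 0)
      (𝓝 (fderiv ℝ (fderiv ℝ f) x₀ v v / 2)) := by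
  have hline : Tendsto (fun s : ℝ => x₀ + s • v) (𝓝 0) (𝓝 x₀) :=
    Continuous.tendsto' (by fun_prop) _ _ (by simp)
  have hdiff : ∀ᶠ s in 𝓝 (0 : ℝ), DifferentiableAt ℝ f (x₀ + s • v) :=
    hline.eventually ((hf.eventually (by simp)).mono fun y hy => hy.differentiableAt (by simp))
  have hslope := tendsto_inv_smul_fderiv_add_smul (v := v)
    ((hf.fderiv_right (m := 1) le_rfl).differentiableAt one_ne_zero) hdf
  apply HasDerivAt.lhopital_zero_nhdsGT (f' := fun s => fderiv ℝ f (x₀ + s • v) v)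
    (g' := fun s => 2 * s)
  · filter_upwards [nhdsWithin_le_nhds hdiff] with s hs
    exact hs.hasFDerivAt.comp_hasDerivAt s
      (by simpa using ((hasDerivAt_id s).smul_const v).const_add x₀)
  · exact Eventually.of_forall fun s => by simpa using hasDerivAt_pow 2 s
  · filter_upwards [self_mem_nhdsWithin] with s hs
    exact mul_ne_zero two_ne_zero hs.ne'
  · simpa [hf0, Function.comp_def] using
      (hf.continuousAt.tendsto.comp hline).mono_left nhdsWithin_le_nhds
  · exact ((continuous_pow 2).tendsto' 0 0 (by simp)).mono_left nhdsWithin_le_nhds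
  · refine ((((ContinuousLinearMap.apply ℝ ℝ v).continuous.tendsto _).comp hslope).div_const
      2).congr fun s => ?_
    simp only [Function.comp_apply, ContinuousLinearMap.apply_apply, smul_apply, smul_eq_mul]
    field_simp

theorem sq_hessian_le_of_eventually_sq_fderiv_le (hf : ContDiffAt ℝ 2 f x₀) (hf0 : f x₀ = 0)
    (hdf : fderiv ℝ f x₀ = 0) {w : ℝ → E} (hw : Tendsto w (𝓝[>] 0) (𝓝 v)) {c : ℝ}
    (hbound : ∀ᶠ s in 𝓝[>] 0, fderiv ℝ f (x₀ + s • v) (w s) ^ 2 ≤ c * f (x₀ + s • v)) :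
    fderiv ℝ (fderiv ℝ f) x₀ v v ^ 2 ≤ c * (fderiv ℝ (fderiv ℝ f) x₀ v v / 2) := by
  have hslope := tendsto_inv_smul_fderiv_add_smul (v := v)
    ((hf.fderiv_right (m := 1) le_rfl).differentiableAt one_ne_zero) hdf
  have hlhs : Tendsto (fun s : ℝ => (fderiv ℝ f (x₀ + s • v) (w s) / s) ^ 2) (𝓝[>] 0)
      (𝓝 (fderiv ℝ (fderiv ℝ f) x₀ v v ^ 2)) := by
    refine ((isBoundedBilinearMap_apply.continuous.tendsto _).comp
      (hslope.prodMk_nhds hw)).pow 2 |>.congr fun s => ?_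
    simp [div_eq_inv_mul]
  have hrhs : Tendsto (fun s : ℝ => c * (f (x₀ + s • v) / s ^ 2)) (𝓝[>] 0)
      (𝓝 (c * (fderiv ℝ (fderiv ℝ f) x₀ v v / 2))) :=
    (tendsto_apply_add_smul_div_sq hf hf0 hdf).const_mul c
  refine le_of_tendsto_of_tendsto hlhs hrhs ?_
  filter_upwards [hbound, self_mem_nhdsWithin] with s hs (hpos : 0 < s)
  rw [div_pow, mul_div_assoc']
  gcongr

end SecondOrder

section Hamilton

variable {d : ℕ}

/-- `H_φ = (∂_ξ φ, -∂_x φ)` at a point where `dφ = L`, as a vector in `(t, x, ξ)`-space. -/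
def hamiltonVector (L : (Fin d → ℝ) × (Fin d → ℝ) →L[ℝ] ℝ) : ℝ × (Fin d → ℝ) × (Fin d → ℝ) :=
  (0, fun j => L (0, Pi.single j 1), fun j => -L (Pi.single j 1, 0))

theorem continuous_hamiltonVector : Continuous (hamiltonVector (d := d)) := by
  unfold hamiltonVector
  fun_prop

theorem map_zero_prod_eq_sum {R M ι F : Type*} [CommSemiring R] [AddCommMonoid M]
    [Module R M] [Fintype ι] [DecidableEq ι] [FunLike F (R × (ι → R) × (ι → R)) M]
    [LinearMapClass F R _ M] (ℓ : F) (x ξ : ι → R) :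
    ℓ (0, x, ξ) = ∑ j, (x j • ℓ (0, Pi.single j 1, 0) + ξ j • ℓ (0, 0, Pi.single j 1)) := by
  have hdecomp : ((0 : R), x, ξ) =
      ∑ j, (x j • ((0 : R), Pi.single j 1, 0) + ξ j • ((0 : R), 0, Pi.single j 1)) := by
    ext i <;> simp [Prod.fst_sum, Prod.snd_sum, Finset.sum_apply, Pi.single_apply]
  rw [hdecomp, map_sum]
  simp only [map_add, map_smul]

theorem sum_poisson_eq_apply_hamiltonVector
    (L : (Fin d → ℝ) × (Fin d → ℝ) →L[ℝ] ℝ) (ℓ : ℝ × (Fin d → ℝ) × (Fin d → ℝ) →L[ℝ] ℝ) :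
    ∑ j : Fin d, (L (0, Pi.single j 1) * ℓ (0, Pi.single j 1, 0)
      - L (Pi.single j 1, 0) * ℓ (0, 0, Pi.single j 1)) = ℓ (hamiltonVector L) := by
  rw [hamiltonVector, map_zero_prod_eq_sum]
  simp [sub_eq_add_neg]

end Hamilton

theorem time_function_of_poisson_bracket_bound_general (d : ℕ)
    (x₀ ξ₀ : Fin d → ℝ)
    (a : ℝ × (Fin d → ℝ) × (Fin d → ℝ) → ℝ)
    (W : Set (ℝ × (Fin d → ℝ) × (Fin d → ℝ))) (hW : IsOpen W)
    (hρ'W : ((0 : ℝ), x₀, ξ₀) ∈ W)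
    (ha : ContDiffOn ℝ (⊤ : ℕ∞) a W)
    (ha0 : a (0, x₀, ξ₀) = 0)
    (hgrad : fderiv ℝ a (0, x₀, ξ₀) = 0)
    (δ : ℝ) (hδ : 0 < δ)
    (V : Set ((Fin d → ℝ) × (Fin d → ℝ))) (hV : IsOpen V) (hV0 : (x₀, ξ₀) ∈ V)
    (φ : (Fin d → ℝ) × (Fin d → ℝ) → ℝ) (hφ : ContDiffOn ℝ (⊤ : ℕ∞) φ V)
    (κ : ℝ) (hκ1 : κ < 1)
    (hbracket : ∀ t ∈ Set.Ico (0 : ℝ) δ, ∀ z ∈ V,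
      (∑ j : Fin d,
          (fderiv ℝ φ z ((0 : Fin d → ℝ), Pi.single j 1)
              * fderiv ℝ a (t, z.1, z.2) ((0 : ℝ), Pi.single j 1, (0 : Fin d → ℝ))
            - fderiv ℝ φ z (Pi.single j 1, (0 : Fin d → ℝ))
              * fderiv ℝ a (t, z.1, z.2) ((0 : ℝ), (0 : Fin d → ℝ), Pi.single j 1))) ^ 2
        ≤ 4 * κ * a (t, z.1, z.2)) :
    ∀ v : ℝ × (Fin d → ℝ) × (Fin d → ℝ),
      v = ((0 : ℝ),
            (fun j => fderiv ℝ φ (x₀, ξ₀) ((0 : Fin d → ℝ), Pi.single j 1)),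
            (fun j => -fderiv ℝ φ (x₀, ξ₀) (Pi.single j 1, (0 : Fin d → ℝ)))) →
      (1 / 2) * fderiv ℝ (fun w => fderiv ℝ a w v) ((0 : ℝ), x₀, ξ₀) v < 1 := by
  intro v hv
  replace hv : v = hamiltonVector (fderiv ℝ φ (x₀, ξ₀)) := hv
  set z : ℝ → (Fin d → ℝ) × (Fin d → ℝ) := fun s => (x₀, ξ₀) + s • v.2
  have ha2 : ContDiffAt ℝ 2 a (0, x₀, ξ₀) :=
    (ha.contDiffAt (hW.mem_nhds hρ'W)).of_le (WithTop.coe_le_coe.mpr le_top)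
  have hz : Tendsto z (𝓝 0) (𝓝 (x₀, ξ₀)) := Continuous.tendsto' (by fun_prop) _ _ (by simp [z])
  have hw : Tendsto (fun s => hamiltonVector (fderiv ℝ φ (z s))) (𝓝[>] 0) (𝓝 v) :=
    hv ▸ (continuous_hamiltonVector.continuousAt.tendsto.comp
      (((hφ.contDiffAt (hV.mem_nhds hV0)).continuousAt_fderiv (by simp)).tendsto.comp
        hz)).mono_left nhdsWithin_le_nhds
  have hbound : ∀ᶠ s : ℝ in 𝓝[>] 0, fderiv ℝ a ((0, x₀, ξ₀) + s • v)
      (hamiltonVector (fderiv ℝ φ (z s))) ^ 2 ≤ 4 * κ * a ((0, x₀, ξ₀) + s • v) := by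
    filter_upwards [(hz.eventually (hV.mem_nhds hV0)).filter_mono nhdsWithin_le_nhds] with s hs
    have hpoint : ((0 : ℝ), x₀, ξ₀) + s • v = (0, (z s).1, (z s).2) := by
      simp [z, hv, hamiltonVector]
    rw [hpoint, ← sum_poisson_eq_apply_hamiltonVector]
    exact hbracket 0 ⟨le_rfl, hδ⟩ _ hs
  have hhess := sq_hessian_le_of_eventually_sq_fderiv_le ha2 ha0 hgrad hw hbound
  rw [fderiv_apply_const_eq_flip
    ((ha2.fderiv_right (m := 1) le_rfl).differentiableAt one_ne_zero)]
  simp only [ContinuousLinearMap.flip_apply]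
  nlinarith [hhess]

/-- If `a(t, x, ξ) ≥ 0` for `0 ≤ t < δ` near `ρ' = (0, x₀, ξ₀)`, `a` vanishes to first
order at `ρ'`, `Q` is the quadratic part of `a` at `ρ'`, and the Poisson bracket bound
`{φ, a}² ≤ 4 κ a` holds with `0 < κ < 1`, then `Q(0, ∇_ξ φ(x₀,ξ₀), -∇_x φ(x₀,ξ₀)) < 1`,
i.e. `f = t - φ` is a time function for `p = -τ² + Q` at `ρ = (0, x₀, 0, ξ₀)`. -/
theorem time_function_of_poisson_bracket_bound (d : ℕ) (hd : 1 ≤ d)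
    (x₀ ξ₀ : Fin d → ℝ)
    (a : ℝ × (Fin d → ℝ) × (Fin d → ℝ) → ℝ)
    (W : Set (ℝ × (Fin d → ℝ) × (Fin d → ℝ))) (hW : IsOpen W)
    (hρ'W : ((0 : ℝ), x₀, ξ₀) ∈ W)
    (ha : ContDiffOn ℝ (⊤ : ℕ∞) a W)
    (ha0 : a (0, x₀, ξ₀) = 0)
    (hgrad : fderiv ℝ a (0, x₀, ξ₀) = 0)
    (δ : ℝ) (hδ : 0 < δ)
    (V : Set ((Fin d → ℝ) × (Fin d → ℝ))) (hV : IsOpen V) (hV0 : (x₀, ξ₀) ∈ V)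
    (hVW : ∀ t ∈ Set.Ico (0 : ℝ) δ, ∀ z ∈ V, (t, z.1, z.2) ∈ W)
    (hnn : ∀ t ∈ Set.Ico (0 : ℝ) δ, ∀ z ∈ V, 0 ≤ a (t, z.1, z.2))
    (φ : (Fin d → ℝ) × (Fin d → ℝ) → ℝ) (hφ : ContDiffOn ℝ (⊤ : ℕ∞) φ V)
    (κ : ℝ) (hκ0 : 0 < κ) (hκ1 : κ < 1)
    (hbracket : ∀ t ∈ Set.Ico (0 : ℝ) δ, ∀ z ∈ V,
      (∑ j : Fin d,
          (fderiv ℝ φ z ((0 : Fin d → ℝ), Pi.single j 1)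
              * fderiv ℝ a (t, z.1, z.2) ((0 : ℝ), Pi.single j 1, (0 : Fin d → ℝ))
            - fderiv ℝ φ z (Pi.single j 1, (0 : Fin d → ℝ))
              * fderiv ℝ a (t, z.1, z.2) ((0 : ℝ), (0 : Fin d → ℝ), Pi.single j 1))) ^ 2
        ≤ 4 * κ * a (t, z.1, z.2)) :
    ∀ v : ℝ × (Fin d → ℝ) × (Fin d → ℝ),
      v = ((0 : ℝ),
            (fun j => fderiv ℝ φ (x₀, ξ₀) ((0 : Fin d → ℝ), Pi.single j 1)),
            (fun j => -fderiv ℝ φ (x₀, ξ₀) (Pi.single j 1, (0 : Fin d → ℝ)))) →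
      (1 / 2) * fderiv ℝ (fun w => fderiv ℝ a w v) ((0 : ℝ), x₀, ξ₀) v < 1 :=
  time_function_of_poisson_bracket_bound_general d x₀ ξ₀ a W hW hρ'W ha ha0 hgrad δ hδ V hV hV0 φ hφ
    κ hκ1 hbracket
end

section
/- Let d ≥ 1, T, T₁ > 0, let U ⊆ ℝ^d be an open neighborhood of 0, and let a : (−T,T) × U × (ℝ^d ∖ {0}) → ℝ be smooth, positively homogeneous of degree 2 in ξ, with a(t,x,ξ) ≥ 0 for all (t,x,ξ) ∈ [0,T₁) × U × (ℝ^d ∖ {0}). Set p = −τ² + a. If ρ = (0,0,0,ξ̄), ξ̄ ≠ 0, is a singular point of p = 0 (i.e. a and its first derivatives vanish at (0,0,ξ̄)) at which the Hamilton map F_p(ρ) has a nonzero real eigenvalue, then ∂²a/∂t²(0,0,ξ̄) ≠ 0 (and hence, by nonnegativity of t ↦ a(t,0,ξ̄) on [0,T₁), ∂²a/∂t²(0,0,ξ̄) > 0). -/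
open Filter Topology


/-- Basis vectors of `ℝ × ℝ^d` indexed by `Unit ⊕ Fin d`
(`Sum.inl` for the `t`/`τ` slot, `Sum.inr j` for the `j`-th `x`/`ξ` slot). -/
def halfBasis (d : ℕ) (i : Unit ⊕ Fin d) : ℝ × (Fin d → ℝ) :=
  Sum.elim (fun _ => ((1 : ℝ), (0 : Fin d → ℝ)))
    (fun j => ((0 : ℝ), Pi.single j 1)) i

/-- Basis vectors of the phase space `(ℝ × ℝ^d) × (ℝ × ℝ^d)` (positions `(t,x)`,
duals `(τ,ξ)`). -/
def phaseBasis (d : ℕ) (i : (Unit ⊕ Fin d) ⊕ (Unit ⊕ Fin d)) :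
    (ℝ × (Fin d → ℝ)) × (ℝ × (Fin d → ℝ)) :=
  Sum.elim (fun k => (halfBasis d k, 0)) (fun k => (0, halfBasis d k)) i

/-- The Hessian matrix of `p` at `ρ`, in the variables `(t, x, τ, ξ)`. -/
noncomputable def hessianMatrix (d : ℕ)
    (p : (ℝ × (Fin d → ℝ)) × (ℝ × (Fin d → ℝ)) → ℝ)
    (ρ : (ℝ × (Fin d → ℝ)) × (ℝ × (Fin d → ℝ))) :
    Matrix ((Unit ⊕ Fin d) ⊕ (Unit ⊕ Fin d)) ((Unit ⊕ Fin d) ⊕ (Unit ⊕ Fin d)) ℝ :=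
  Matrix.of fun i j =>
    fderiv ℝ (fun w => fderiv ℝ p w (phaseBasis d j)) ρ (phaseBasis d i)

/-- The Hamilton map `F_p(ρ) = (1/2) J (Hess p)(ρ)`, where
`J = [[0, I], [-I, 0]]` is the standard symplectic matrix. -/
noncomputable def hamiltonMap (d : ℕ)
    (p : (ℝ × (Fin d → ℝ)) × (ℝ × (Fin d → ℝ)) → ℝ)
    (ρ : (ℝ × (Fin d → ℝ)) × (ℝ × (Fin d → ℝ))) :
    Matrix ((Unit ⊕ Fin d) ⊕ (Unit ⊕ Fin d)) ((Unit ⊕ Fin d) ⊕ (Unit ⊕ Fin d)) ℝ :=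
  (2⁻¹ : ℝ) • (Matrix.fromBlocks 0 1 (-1) 0 * hessianMatrix d p ρ)

/-- `ρ` is an effectively hyperbolic point for `p`: the Hamilton map `F_p(ρ)` has a
nonzero real eigenvalue. -/
def EffectivelyHyperbolicAt (d : ℕ)
    (p : (ℝ × (Fin d → ℝ)) × (ℝ × (Fin d → ℝ)) → ℝ)
    (ρ : (ℝ × (Fin d → ℝ)) × (ℝ × (Fin d → ℝ))) : Prop :=
  ∃ lam : ℝ, lam ≠ 0 ∧ ∃ v : (Unit ⊕ Fin d) ⊕ (Unit ⊕ Fin d) → ℝ, v ≠ 0 ∧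
    (hamiltonMap d p ρ).mulVec v = lam • v

open Filter Topology

/-- 1D second-derivative nonnegativity at a one-sided local min. -/
lemma second_deriv_nonneg_aux {g g' : ℝ → ℝ} {c : ℝ}
    (hg : ∀ᶠ s in 𝓝 (0:ℝ), HasDerivAt g (g' s) s)
    (hc : HasDerivAt g' c 0)
    (h0 : g 0 = 0) (h0' : g' 0 = 0)
    (hnn : ∀ᶠ s in 𝓝[>] (0:ℝ), 0 ≤ g s) :
    0 ≤ c := by
  by_contra hneg
  push_neg at hneg
  have hslope := hasDerivAt_iff_tendsto_slope.1 hc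
  have hhalf : c / 2 < 0 := by linarith
  have hev : ∀ᶠ s in 𝓝[≠] (0:ℝ), slope g' 0 s < c / 2 := by
    have : Set.Iio (c/2) ∈ 𝓝 c := Iio_mem_nhds (by linarith)
    exact hslope.eventually this
  have hev' : ∀ᶠ s in 𝓝[>] (0:ℝ), g' s < 0 := by
    have : ∀ᶠ s in 𝓝[>] (0:ℝ), slope g' 0 s < c / 2 :=
      hev.filter_mono (nhdsWithin_mono 0 (fun s hs => ne_of_gt hs))
    filter_upwards [this, self_mem_nhdsWithin] with s hs hs'
    have hspos : (0:ℝ) < s := hs'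
    rw [slope_def_field] at hs
    have : (g' s - g' 0) / (s - 0) < c / 2 := hs
    rw [h0', sub_zero, sub_zero, div_lt_iff₀ hspos] at this
    nlinarith
  have hgnhds : ∀ᶠ s in 𝓝 (0:ℝ), HasDerivAt g (g' s) s := hg
  rw [eventually_nhdsWithin_iff] at hev' hnn
  obtain ⟨ε, hε, hball⟩ := Metric.eventually_nhds_iff.1 (hgnhds.and (hev'.and hnn))
  set x := ε / 2 with hx
  have hxpos : 0 < x := by positivity
  have hxball : ∀ s ∈ Set.Icc (0:ℝ) x, HasDerivAt g (g' s) s := by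
    intro s hs
    have : dist s 0 < ε := by
      rw [Real.dist_eq, sub_zero, abs_of_nonneg hs.1]
      have := hs.2; simp only [hx] at this ⊢; linarith
    exact (hball this).1
  have hanti : StrictAntiOn g (Set.Icc (0:ℝ) x) := by
    apply strictAntiOn_of_deriv_neg (convex_Icc _ _)
    · exact fun s hs => (hxball s hs).continuousAt.continuousWithinAt
    · intro s hs
      rw [interior_Icc] at hs
      have hd : dist s 0 < ε := by
        rw [Real.dist_eq, sub_zero, abs_of_nonneg hs.1.le]
        have := hs.2; simp only [hx] at this; linarith
      rw [(hxball s ⟨hs.1.le, hs.2.le⟩).deriv]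
      exact ((hball hd).2.1) hs.1
  have hlt : g x < g 0 := hanti ⟨le_refl 0, hxpos.le⟩ ⟨hxpos.le, le_refl x⟩ hxpos
  have hge : 0 ≤ g x := by
    have hd : dist x 0 < ε := by
      rw [Real.dist_eq, sub_zero, abs_of_nonneg hxpos.le]; simp only [hx]; linarith
    exact ((hball hd).2.2) hxpos
  rw [h0] at hlt; linarith

/-- Cauchy-Schwarz type degeneracy for a psd symmetric bilinear form. -/
lemma bilin_eq_zero_of_diag_zero {E : Type*} [NormedAddCommGroup E] [NormedSpace ℝ E]
    (φ : E →L[ℝ] E →L[ℝ] ℝ) (hpsd : ∀ u, 0 ≤ φ u u)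
    (hsymm : ∀ u w, φ u w = φ w u) {u : E} (hu : φ u u = 0) (w : E) :
    φ u w = 0 := by
  set C := φ w w with hC
  set β := φ u w with hβ
  have hkey : ∀ s : ℝ, 0 ≤ 2 * s * β + s ^ 2 * C := by
    intro s
    have := hpsd (u + s • w)
    simp only [map_add, map_smul, ContinuousLinearMap.add_apply,
      ContinuousLinearMap.smul_apply, smul_eq_mul] at this
    rw [hsymm w u] at this
    nlinarith [this]
  have hC0 : 0 ≤ C := hpsd w
  by_contra hβ0
  have h1 := hkey (-β / (C + 1))
  have hC1 : (0:ℝ) < C + 1 := by linarith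
  have hβsq : 0 < β ^ 2 := by positivity
  have h2 : 0 ≤ (2 * (-β / (C + 1)) * β + (-β / (C + 1)) ^ 2 * C) * (C + 1) ^ 2 :=
    mul_nonneg h1 (by positivity)
  have h3 : (2 * (-β / (C + 1)) * β + (-β / (C + 1)) ^ 2 * C) * (C + 1) ^ 2
      = -2 * β ^ 2 * (C + 1) + β ^ 2 * C := by
    field_simp
  rw [h3] at h2
  nlinarith [hβsq, hC0]

set_option maxHeartbeats 1000000 in
/-- If `ρ = (0, 0, 0, ξ̄)` is an effectively hyperbolic singular point of
`p = -τ² + a(t, x, ξ)`, where `a ≥ 0` for `0 ≤ t < T₁`, then `∂²a/∂t²(0, 0, ξ̄) > 0`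
(in particular it is nonzero). -/
theorem dtt_pos_of_effectively_hyperbolic (d : ℕ) (hd : 1 ≤ d)
    (T T₁ : ℝ) (hT : 0 < T) (hT₁ : 0 < T₁)
    (U : Set (Fin d → ℝ)) (hU : IsOpen U) (h0U : (0 : Fin d → ℝ) ∈ U)
    (a : ℝ × (Fin d → ℝ) × (Fin d → ℝ) → ℝ)
    (ha : ContDiffOn ℝ (⊤ : ℕ∞) a
      (Set.Ioo (-T) T ×ˢ U ×ˢ {ξ : Fin d → ℝ | ξ ≠ 0}))
    (hhom : ∀ t ∈ Set.Ioo (-T) T, ∀ x ∈ U, ∀ ξ : Fin d → ℝ, ξ ≠ 0 →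
      ∀ s : ℝ, 0 < s → a (t, x, s • ξ) = s ^ 2 * a (t, x, ξ))
    (hnn : ∀ t ∈ Set.Ico (0 : ℝ) T₁ ∩ Set.Ioo (-T) T, ∀ x ∈ U,
      ∀ ξ : Fin d → ℝ, ξ ≠ 0 → 0 ≤ a (t, x, ξ))
    (ξb : Fin d → ℝ) (hξb : ξb ≠ 0)
    (hsing0 : a (0, 0, ξb) = 0)
    (hsing1 : fderiv ℝ a ((0 : ℝ), (0 : Fin d → ℝ), ξb) = 0)
    (heff : EffectivelyHyperbolicAt d
      (fun w => -(w.2.1) ^ 2 + a (w.1.1, w.1.2, w.2.2))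
      ((0, 0), (0, ξb))) :
    0 < fderiv ℝ (fun z => fderiv ℝ a z ((1 : ℝ), (0 : Fin d → ℝ), (0 : Fin d → ℝ)))
        ((0 : ℝ), (0 : Fin d → ℝ), ξb)
        ((1 : ℝ), (0 : Fin d → ℝ), (0 : Fin d → ℝ)) := by
  classical
  set z₀ : ℝ × (Fin d → ℝ) × (Fin d → ℝ) := (0, 0, ξb) with hz₀def
  set S : Set (ℝ × (Fin d → ℝ) × (Fin d → ℝ)) :=
    Set.Ioo (-T) T ×ˢ U ×ˢ {ξ : Fin d → ℝ | ξ ≠ 0} with hSdef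
  have hSopen : IsOpen S :=
    isOpen_Ioo.prod (hU.prod isOpen_compl_singleton)
  have hz₀S : z₀ ∈ S := by
    have : ((0:ℝ), (0 : Fin d → ℝ), ξb) ∈
        Set.Ioo (-T) T ×ˢ U ×ˢ {ξ : Fin d → ℝ | ξ ≠ 0} :=
      ⟨⟨by show -T < 0; linarith, hT⟩, h0U, hξb⟩
    simpa [hSdef, hz₀def] using this
  have hSnhds : S ∈ 𝓝 z₀ := hSopen.mem_nhds hz₀S
  have hdiff : ∀ z ∈ S, DifferentiableAt ℝ a z := fun z hz =>
    (ha.contDiffAt (hSopen.mem_nhds hz)).differentiableAt (by simp)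
  have hfd : ∀ᶠ z in 𝓝 z₀, HasFDerivAt a (fderiv ℝ a z) z := by
    filter_upwards [hSopen.mem_nhds hz₀S] with z hz using (hdiff z hz).hasFDerivAt
  set A2 := fderiv ℝ (fderiv ℝ a) z₀ with hA2def
  have hA2 : HasFDerivAt (fderiv ℝ a) A2 z₀ := by
    have h1 : ContDiffAt ℝ (⊤ : ℕ∞) a z₀ := ha.contDiffAt hSnhds
    have h2 : ContDiffAt ℝ 1 (fderiv ℝ a) z₀ := h1.fderiv_right (by norm_cast)
    exact (h2.differentiableAt one_ne_zero).hasFDerivAt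
  have hsymm : ∀ p q, A2 p q = A2 q p := fun p q =>
    second_derivative_symmetric_of_eventually hfd hA2 p q
  have hpsd0 : ∀ u : ℝ × (Fin d → ℝ) × (Fin d → ℝ), 0 ≤ u.1 → 0 ≤ A2 u u := by
    intro u hu1
    have hlinecont : Continuous (fun s : ℝ => z₀ + s • u) :=
      continuous_const.add (continuous_id.smul continuous_const)
    have hline0 : z₀ + (0:ℝ) • u = z₀ := by simp
    have hline_mem : ∀ᶠ s in 𝓝 (0:ℝ), z₀ + s • u ∈ S := by
      have hca : ContinuousAt (fun s : ℝ => z₀ + s • u) 0 := hlinecont.continuousAt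
      exact hca.eventually_mem (by rw [hline0]; exact hSnhds)
    have hlineD : ∀ s : ℝ, HasDerivAt (fun s : ℝ => z₀ + s • u) u s := by
      intro s
      simpa using ((hasDerivAt_id s).smul_const u).const_add z₀
    have hg : ∀ᶠ s in 𝓝 (0:ℝ), HasDerivAt (fun s : ℝ => a (z₀ + s • u))
        (fderiv ℝ a (z₀ + s • u) u) s := by
      filter_upwards [hline_mem] with s hs
      exact (hdiff _ hs).hasFDerivAt.comp_hasDerivAt s (hlineD s)
    have hc : HasDerivAt (fun s : ℝ => fderiv ℝ a (z₀ + s • u) u) (A2 u u) 0 := by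
      have h1 : HasDerivAt (fun s : ℝ => fderiv ℝ a (z₀ + s • u)) (A2 u) 0 := by
        have h2 : HasFDerivAt (fderiv ℝ a) A2 (z₀ + (0:ℝ) • u) := hline0.symm ▸ hA2
        exact h2.comp_hasDerivAt 0 (hlineD 0)
      simpa using h1.clm_apply (hasDerivAt_const (0:ℝ) u)
    have h0 : a (z₀ + (0:ℝ) • u) = 0 := by rw [hline0]; exact hsing0
    have h0' : fderiv ℝ a (z₀ + (0:ℝ) • u) u = 0 := by rw [hline0, hsing1]; rfl
    have hcoord : ∀ s : ℝ, (z₀ + s • u).1 = s * u.1 := by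
      intro s; simp [hz₀def]
    have hnn' : ∀ᶠ s in nhdsWithin (0:ℝ) (Set.Ioi 0), (0:ℝ) ≤ (fun s : ℝ => a (z₀ + s • u)) s := by
      have hsm : ∀ᶠ s in 𝓝 (0:ℝ), |s * u.1| < T₁ := by
        have hca : ContinuousAt (fun s : ℝ => |s * u.1|) 0 :=
          ((continuous_id.mul continuous_const).abs).continuousAt
        have := hca.eventually_mem
          (show Set.Iio T₁ ∈ 𝓝 (|(0:ℝ) * u.1|) by
            simp only [zero_mul, abs_zero]; exact Iio_mem_nhds hT₁)
        exact this
      filter_upwards [hline_mem.filter_mono nhdsWithin_le_nhds,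
        hsm.filter_mono nhdsWithin_le_nhds, self_mem_nhdsWithin] with s hsmem hsm' hspos
      obtain ⟨ht, hx, hξ⟩ := hsmem
      have hspos' : (0:ℝ) < s := hspos
      have h1 : (z₀ + s • u).1 ∈ Set.Ico (0:ℝ) T₁ ∩ Set.Ioo (-T) T := by
        refine ⟨⟨?_, ?_⟩, ht⟩
        · rw [hcoord]; exact mul_nonneg hspos'.le hu1
        · rw [hcoord]; exact lt_of_abs_lt hsm'
      exact hnn _ h1 _ hx _ hξ
    exact second_deriv_nonneg_aux hg hc h0 h0' hnn'
  have hpsd : ∀ u : ℝ × (Fin d → ℝ) × (Fin d → ℝ), 0 ≤ A2 u u := by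
    intro u
    rcases le_or_gt 0 u.1 with h | h
    · exact hpsd0 u h
    · have := hpsd0 (-u) (by simp; linarith)
      simpa using this
  set et : ℝ × (Fin d → ℝ) × (Fin d → ℝ) := (1, 0, 0) with hetdef
  have hgoal_eq : fderiv ℝ (fun z => fderiv ℝ a z et) z₀ et = A2 et et := by
    have h := hA2.clm_apply (hasFDerivAt_const et z₀)
    rw [h.fderiv]
    simp
  rw [hgoal_eq]
  rcases (hpsd et).lt_or_eq with hpos | hzero
  · exact hpos
  exfalso
  have hα : A2 et et = 0 := hzero.symm
  have hrow : ∀ w, A2 et w = 0 := fun w =>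
    bilin_eq_zero_of_diag_zero A2 hpsd hsymm hα w
  -- unpack effective hyperbolicity
  rw [EffectivelyHyperbolicAt] at heff
  set P : ((ℝ × (Fin d → ℝ)) × (ℝ × (Fin d → ℝ))) → ℝ :=
    fun w => -(w.2.1) ^ 2 + a (w.1.1, w.1.2, w.2.2) with hPdef
  set ρF : (ℝ × (Fin d → ℝ)) × (ℝ × (Fin d → ℝ)) := ((0, 0), (0, ξb)) with hρdef
  obtain ⟨lam, hlam, v, hv, heq⟩ := heff
  obtain ⟨Lm, hLm⟩ : ∃ Lm : ((ℝ × (Fin d → ℝ)) × (ℝ × (Fin d → ℝ))) →L[ℝ]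
      (ℝ × (Fin d → ℝ) × (Fin d → ℝ)),
      ∀ w : (ℝ × (Fin d → ℝ)) × (ℝ × (Fin d → ℝ)), Lm w = (w.1.1, w.1.2, w.2.2) := by
    refine ⟨((ContinuousLinearMap.fst ℝ ℝ (Fin d → ℝ)).comp
      (ContinuousLinearMap.fst ℝ (ℝ × (Fin d → ℝ)) (ℝ × (Fin d → ℝ)))).prod
      ((((ContinuousLinearMap.snd ℝ ℝ (Fin d → ℝ)).comp
      (ContinuousLinearMap.fst ℝ (ℝ × (Fin d → ℝ)) (ℝ × (Fin d → ℝ))))).prod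
      ((ContinuousLinearMap.snd ℝ ℝ (Fin d → ℝ)).comp
      (ContinuousLinearMap.snd ℝ (ℝ × (Fin d → ℝ)) (ℝ × (Fin d → ℝ))))), fun w => rfl⟩
  obtain ⟨πm, hπm⟩ : ∃ πm : ((ℝ × (Fin d → ℝ)) × (ℝ × (Fin d → ℝ))) →L[ℝ] ℝ,
      ∀ w : (ℝ × (Fin d → ℝ)) × (ℝ × (Fin d → ℝ)), πm w = w.2.1 :=
    ⟨(ContinuousLinearMap.fst ℝ ℝ (Fin d → ℝ)).comp
      (ContinuousLinearMap.snd ℝ (ℝ × (Fin d → ℝ)) (ℝ × (Fin d → ℝ))), fun w => rfl⟩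
  have hLmρ : Lm ρF = z₀ := by rw [hLm]
  -- derivative of P on a neighborhood
  have hD : ∀ w, Lm w ∈ S → HasFDerivAt P
      (-(πm w • πm + πm w • πm) + (fderiv ℝ a (Lm w)).comp Lm) w := by
    intro w hw
    have h1 : HasFDerivAt (fun y => a (Lm y)) ((fderiv ℝ a (Lm w)).comp Lm) w :=
      (hdiff _ hw).hasFDerivAt.comp w Lm.hasFDerivAt
    have h2 : HasFDerivAt (fun y : (ℝ × (Fin d → ℝ)) × (ℝ × (Fin d → ℝ)) =>
        -(πm y * πm y)) (-(πm w • πm + πm w • πm)) w :=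
      ((πm.hasFDerivAt).mul (πm.hasFDerivAt)).neg
    have h3 := h2.add h1
    have hfun : (fun y : (ℝ × (Fin d → ℝ)) × (ℝ × (Fin d → ℝ)) =>
        -(πm y * πm y) + a (Lm y)) = P := by
      rw [hPdef]
      funext y
      rw [hπm, hLm]
      ring
    rw [← hfun]; exact h3
  have hfp : ∀ᶠ w in 𝓝 ρF, fderiv ℝ P w
      = -(πm w • πm + πm w • πm) + (fderiv ℝ a (Lm w)).comp Lm := by
    have hpre : Lm ⁻¹' S ∈ 𝓝 ρF :=
      Lm.continuous.continuousAt.preimage_mem_nhds (by rw [hLmρ]; exact hSnhds)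
    filter_upwards [hpre] with w hw using (hD w hw).fderiv
  -- the Hessian entries
  have hHess : ∀ V W : (ℝ × (Fin d → ℝ)) × (ℝ × (Fin d → ℝ)),
      fderiv ℝ (fun w => fderiv ℝ P w W) ρF V
      = -2 * V.2.1 * W.2.1 + A2 (Lm V) (Lm W) := by
    intro V W
    have heva : (fun w => fderiv ℝ P w W) =ᶠ[𝓝 ρF]
        (fun w => -(πm w * πm W + πm w * πm W) + fderiv ℝ a (Lm w) (Lm W)) := by
      filter_upwards [hfp] with w hw
      rw [hw]
      simp
    rw [heva.fderiv_eq]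
    have hB1 : HasFDerivAt (fun w => fderiv ℝ a (Lm w)) (A2.comp Lm) ρF := by
      have hA2' : HasFDerivAt (fderiv ℝ a) A2 (Lm ρF) := hLmρ.symm ▸ hA2
      exact hA2'.comp ρF Lm.hasFDerivAt
    have hB2 := hB1.clm_apply (hasFDerivAt_const (Lm W) ρF)
    have h1 : HasFDerivAt (fun w : (ℝ × (Fin d → ℝ)) × (ℝ × (Fin d → ℝ)) =>
        πm w * πm W) (πm W • πm) ρF := by
      simpa using (πm.hasFDerivAt (x := ρF)).mul_const (πm W)
    have h2 := ((h1.add h1).neg).add hB2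
    rw [HasFDerivAt.fderiv (f := fun w => -(πm w * πm W + πm w * πm W) + fderiv ℝ a (Lm w) (Lm W)) h2]
    simp only [ContinuousLinearMap.add_apply, ContinuousLinearMap.neg_apply,
      ContinuousLinearMap.smul_apply, ContinuousLinearMap.coe_comp', Function.comp_apply,
      ContinuousLinearMap.flip_apply, ContinuousLinearMap.comp_zero,
      ContinuousLinearMap.zero_apply, smul_eq_mul]
    rw [hπm, hπm]
    ring
  have hentry : ∀ i j, hessianMatrix d P ρF i j
      = -2 * (phaseBasis d i).2.1 * (phaseBasis d j).2.1
        + A2 (Lm (phaseBasis d i)) (Lm (phaseBasis d j)) := by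
    intro i j
    rw [hessianMatrix]
    exact hHess _ _
  -- basis values
  have hτ1 : ∀ k : Unit ⊕ Fin d, (phaseBasis d (Sum.inl k)).2.1 = 0 := by
    intro k; simp [phaseBasis]
  have hτ2a : (phaseBasis d (Sum.inr (Sum.inl ()))).2.1 = 1 := by
    simp [phaseBasis, halfBasis]
  have hτ2b : ∀ m : Fin d, (phaseBasis d (Sum.inr (Sum.inr m))).2.1 = 0 := by
    intro m; simp [phaseBasis, halfBasis]
  have hLet : Lm (phaseBasis d (Sum.inl (Sum.inl ()))) = et := by rw [hLm]; rfl
  have hL0 : Lm (phaseBasis d (Sum.inr (Sum.inl ()))) = 0 := by rw [hLm]; rfl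
  -- the vector u
  set u : ℝ × (Fin d → ℝ) × (Fin d → ℝ) :=
    ∑ j : (Unit ⊕ Fin d) ⊕ (Unit ⊕ Fin d), v j • Lm (phaseBasis d j) with hudef
  have hτsum : ∑ j : (Unit ⊕ Fin d) ⊕ (Unit ⊕ Fin d), (phaseBasis d j).2.1 * v j
      = v (Sum.inr (Sum.inl ())) := by
    rw [Fintype.sum_sum_type]
    simp [Fintype.sum_sum_type, hτ1, hτ2a, hτ2b]
  have hmv : ∀ i, (hessianMatrix d P ρF).mulVec v i
      = -2 * (phaseBasis d i).2.1 * v (Sum.inr (Sum.inl ()))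
        + A2 (Lm (phaseBasis d i)) u := by
    intro i
    have hstep : (hessianMatrix d P ρF).mulVec v i
        = ∑ j, (-2 * (phaseBasis d i).2.1 * ((phaseBasis d j).2.1 * v j)
            + v j • A2 (Lm (phaseBasis d i)) (Lm (phaseBasis d j))) := by
      simp only [Matrix.mulVec, dotProduct]
      apply Finset.sum_congr rfl
      intro j _
      rw [hentry]
      simp only [smul_eq_mul]
      ring
    rw [hstep, Finset.sum_add_distrib, ← Finset.mul_sum, hτsum]
    congr 1
    rw [hudef, map_sum]
    simp
  -- the eigen equations
  have heq' : ∀ i, 2⁻¹ * ((Matrix.fromBlocks 0 1 (-1) 0 :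
      Matrix ((Unit ⊕ Fin d) ⊕ (Unit ⊕ Fin d)) ((Unit ⊕ Fin d) ⊕ (Unit ⊕ Fin d)) ℝ).mulVec
      ((hessianMatrix d P ρF).mulVec v)) i = lam * v i := by
    intro i
    have h := congrFun heq i
    rw [hamiltonMap, Matrix.smul_mulVec, ← Matrix.mulVec_mulVec] at h
    simpa using h
  have hE1 : ∀ k : Unit ⊕ Fin d,
      2⁻¹ * ((hessianMatrix d P ρF).mulVec v (Sum.inr k)) = lam * v (Sum.inl k) := by
    intro k
    have h := heq' (Sum.inl k)
    rwa [Matrix.fromBlocks_mulVec, Sum.elim_inl, Matrix.zero_mulVec, Matrix.one_mulVec,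
      zero_add] at h
  have hE2 : ∀ k : Unit ⊕ Fin d,
      2⁻¹ * (-((hessianMatrix d P ρF).mulVec v (Sum.inl k))) = lam * v (Sum.inr k) := by
    intro k
    have h := heq' (Sum.inr k)
    rwa [Matrix.fromBlocks_mulVec, Sum.elim_inr, Matrix.zero_mulVec, Matrix.neg_mulVec,
      Matrix.one_mulVec, add_zero] at h
  -- vτ = 0
  have hvτ : v (Sum.inr (Sum.inl ())) = 0 := by
    have h := hE2 (Sum.inl ())
    rw [hmv, hτ1, hLet, hrow] at h
    have h0 : lam * v (Sum.inr (Sum.inl ())) = 0 := by linarith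
    rcases mul_eq_zero.mp h0 with h' | h'
    · exact absurd h' hlam
    · exact h'
  have hval2 : ∀ k : Unit ⊕ Fin d,
      A2 (Lm (phaseBasis d (Sum.inl k))) u = -2 * lam * v (Sum.inr k) := by
    intro k
    have h := hE2 k
    rw [hmv, hτ1] at h
    linarith
  have hval1 : ∀ k : Unit ⊕ Fin d,
      A2 (Lm (phaseBasis d (Sum.inr k))) u = 2 * lam * v (Sum.inl k) := by
    intro k
    have h := hE1 k
    rw [hmv, hvτ] at h
    linarith
  -- A2 u u = 0
  have huu : A2 u u = 0 := by
    have hexp : A2 u u = ∑ j : (Unit ⊕ Fin d) ⊕ (Unit ⊕ Fin d),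
        v j * A2 (Lm (phaseBasis d j)) u := by
      have h1 : A2 u = ∑ j : (Unit ⊕ Fin d) ⊕ (Unit ⊕ Fin d),
          v j • A2 (Lm (phaseBasis d j)) := by
        conv_lhs => rw [hudef]
        rw [map_sum]
        simp only [map_smul]
      calc A2 u u = (∑ j : (Unit ⊕ Fin d) ⊕ (Unit ⊕ Fin d),
          v j • A2 (Lm (phaseBasis d j))) u := by rw [h1]
      _ = ∑ j : (Unit ⊕ Fin d) ⊕ (Unit ⊕ Fin d), v j * A2 (Lm (phaseBasis d j)) u := by
        rw [ContinuousLinearMap.sum_apply]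
        simp only [ContinuousLinearMap.smul_apply, smul_eq_mul]
    rw [hexp, Fintype.sum_sum_type]
    have e1 : ∑ k : Unit ⊕ Fin d, v (Sum.inl k) * A2 (Lm (phaseBasis d (Sum.inl k))) u
        = ∑ k : Unit ⊕ Fin d, v (Sum.inl k) * (-2 * lam * v (Sum.inr k)) :=
      Finset.sum_congr rfl fun k _ => by rw [hval2]
    have e2 : ∑ k : Unit ⊕ Fin d, v (Sum.inr k) * A2 (Lm (phaseBasis d (Sum.inr k))) u
        = ∑ k : Unit ⊕ Fin d, v (Sum.inr k) * (2 * lam * v (Sum.inl k)) :=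
      Finset.sum_congr rfl fun k _ => by rw [hval1]
    rw [e1, e2, ← Finset.sum_add_distrib]
    apply Finset.sum_eq_zero
    intro k _
    ring
  have hucol : ∀ w, A2 u w = 0 :=
    fun w => bilin_eq_zero_of_diag_zero A2 hpsd hsymm huu w
  -- conclude v = 0
  apply hv
  funext i
  have hfin : ∀ i, A2 (Lm (phaseBasis d i)) u = 0 := by
    intro i
    rw [hsymm]
    exact hucol _
  cases i with
  | inl k =>
    have h := hval1 k
    rw [hfin] at h
    have := mul_eq_zero.mp h.symm
    rcases this with h' | h'
    · rcases mul_eq_zero.mp h' with h'' | h''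
      · norm_num at h''
      · exact absurd h'' hlam
    · exact h'
  | inr k =>
    have h := hval2 k
    rw [hfin] at h
    rcases mul_eq_zero.mp h.symm with h' | h'
    · rcases mul_eq_zero.mp h' with h'' | h''
      · norm_num at h''
      · exact absurd h'' hlam
    · exact h'
end

section
/- Let m ≥ 1 and let f be a smooth real-valued function on an open neighborhood W of 0 in ℝ × ℝ^m, written f(t,y). Suppose f(t,y) ≥ 0 whenever (t,y) ∈ W and t ≥ 0, that f(0,0) = 0, that all first-order partial derivatives of f vanish at (0,0), and that ∂²f/∂t²(0,0) = 0. Then ∂²f/∂t∂y_j(0,0) = 0 for every j = 1,…,m. -/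
/-!
Along every ray `t ↦ t • v` with `v.1 > 0` the function `f` has a one-sided minimum at `t = 0`
with zero slope, so the (symmetric) Hessian `H` of `f` at the origin satisfies `H v v ≥ 0`.
With `e₀ = (1, 0)`, `eⱼ = (0, Pi.single j 1)` and `v = e₀ + c • eⱼ`, the hypothesis
`H e₀ e₀ = 0` turns this into `2 c H e₀ eⱼ + c² H eⱼ eⱼ ≥ 0` for every real `c`, which forces
`H e₀ eⱼ = 0`.
-/

open Filter Set Topology

theorem nonneg_of_hasDerivAt_deriv_of_le_right {g g' : ℝ → ℝ} {a x₀ : ℝ}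
    (hg : ∀ᶠ t in 𝓝 x₀, HasDerivAt g (g' t) t) (hg' : HasDerivAt g' a x₀) (hcrit : g' x₀ = 0)
    (hmin : ∀ᶠ t in 𝓝[>] x₀, g x₀ ≤ g t) : 0 ≤ a := by
  by_contra! ha
  have hneg : ∀ᶠ t in 𝓝[>] x₀, g' t < 0 := by
    filter_upwards [(hasDerivAt_iff_tendsto_slope.1 hg').mono_left (nhdsGT_le_nhdsNE x₀)
      |>.eventually (eventually_lt_nhds ha), self_mem_nhdsWithin] with t hslope (ht : x₀ < t)
    rw [slope_def_field, hcrit, sub_zero] at hslope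
    exact neg_of_div_neg_left hslope (sub_pos.2 ht).le
  obtain ⟨ε, hε, hsub⟩ := mem_nhdsGT_iff_exists_Ioo_subset.1
    ((hg.filter_mono nhdsWithin_le_nhds).and (hneg.and hmin))
  have hanti : StrictAntiOn g (Ico x₀ ε) := by
    refine strictAntiOn_of_deriv_neg (convex_Ico x₀ ε) (fun t ht => ?_) fun t ht => ?_
    · rcases ht.1.eq_or_lt with rfl | hlt
      · exact hg.self_of_nhds.continuousAt.continuousWithinAt
      · exact (hsub ⟨hlt, ht.2⟩).1.continuousAt.continuousWithinAt
    · rw [interior_Ico] at ht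
      obtain ⟨hd, hlt, -⟩ := hsub ht
      rwa [hd.deriv]
  have hmid : (x₀ + ε) / 2 ∈ Ioo x₀ ε := ⟨by linarith [hε.out], by linarith [hε.out]⟩
  exact (hsub hmid).2.2.not_gt (hanti (left_mem_Ico.2 hε) (Ioo_subset_Ico_self hmid) hmid.1)

theorem IsLocalMinOn.second_derivative_nonneg {E : Type*} [NormedAddCommGroup E]
    [NormedSpace ℝ E] {f : E → ℝ} {f' : E → E →L[ℝ] ℝ} {f'' : E →L[ℝ] E →L[ℝ] ℝ} {C : Set E}
    {x w : E} (hmin : IsLocalMinOn f C x) (hw : ∀ᶠ t in 𝓝[>] (0 : ℝ), x + t • w ∈ C)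
    (hf : ∀ᶠ y in 𝓝 x, HasFDerivAt f (f' y) y) (hx : HasFDerivAt f' f'' x) (hcrit : f' x w = 0) :
    0 ≤ f'' w w := by
  have hray : ∀ t : ℝ, HasDerivAt (fun s : ℝ => x + s • w) w t := fun t => by
    simpa using ((hasDerivAt_id t).smul_const w).const_add x
  have hray_tendsto : Tendsto (fun t : ℝ => x + t • w) (𝓝 0) (𝓝 x) := by
    simpa using (hray 0).continuousAt.tendsto
  refine nonneg_of_hasDerivAt_deriv_of_le_right (g := fun t => f (x + t • w))
    (g' := fun t => f' (x + t • w) w) (x₀ := 0) ?_ ?_ (by simpa using hcrit) ?_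
  · exact (hray_tendsto.eventually hf).mono fun t ht => ht.comp_hasDerivAt t (hray t)
  · have hx_w : HasFDerivAt (fun y => f' y w) (f''.flip w) x := by
      simpa using hx.clm_apply (hasFDerivAt_const w x)
    exact hx_w.comp_hasDerivAt_of_eq 0 (hray 0) (by simp)
  · have : Tendsto (fun t : ℝ => x + t • w) (𝓝[>] 0) (𝓝[C] x) :=
      tendsto_nhdsWithin_iff.2 ⟨hray_tendsto.mono_left nhdsWithin_le_nhds, hw⟩
    simpa using this.eventually hmin

theorem ContinuousLinearMap.apply_eq_zero_of_forall_nonneg_add_smul {E : Type*}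
    [AddCommGroup E] [Module ℝ E] [TopologicalSpace E] (B : E →L[ℝ] E →L[ℝ] ℝ)
    (hB : ∀ v w, B v w = B w v) {u w : E} (hu : B u u = 0)
    (hnonneg : ∀ c : ℝ, 0 ≤ B (u + c • w) (u + c • w)) : B u w = 0 := by
  have hdisc : discrim (B w w) (2 * B u w) 0 ≤ 0 := discrim_le_zero fun c => by
    have := hnonneg c
    simp only [map_add, map_smul, add_apply, smul_apply, smul_eq_mul, hu, hB w u] at this
    linarith
  rw [discrim] at hdisc
  nlinarith [sq_nonneg (B u w)]

theorem fderiv_clm_apply_const_apply {𝕜 E F G : Type*} [NontriviallyNormedField 𝕜]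
    [NormedAddCommGroup E] [NormedSpace 𝕜 E] [NormedAddCommGroup F] [NormedSpace 𝕜 F]
    [NormedAddCommGroup G] [NormedSpace 𝕜 G] {c : E → F →L[𝕜] G} {x : E}
    (hc : DifferentiableAt 𝕜 c x) (u : F) (v : E) :
    fderiv 𝕜 (fun y => c y u) x v = fderiv 𝕜 c x v u := by
  simp [fderiv_clm_apply hc (differentiableAt_const u)]

theorem mixed_derivatives_vanish_general (m : ℕ)
    (W : Set (ℝ × (Fin m → ℝ))) (hW : IsOpen W)
    (h0W : ((0 : ℝ), (0 : Fin m → ℝ)) ∈ W)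
    (f : ℝ × (Fin m → ℝ) → ℝ) (hf : ContDiffOn ℝ (⊤ : ℕ∞) f W)
    (hnn : ∀ z ∈ W, 0 ≤ z.1 → 0 ≤ f z)
    (hf0 : f (0, 0) = 0)
    (hgrad : fderiv ℝ f (0, 0) = 0)
    (htt : fderiv ℝ (fun z => fderiv ℝ f z ((1 : ℝ), (0 : Fin m → ℝ))) (0, 0)
        ((1 : ℝ), (0 : Fin m → ℝ)) = 0) :
    ∀ j : Fin m,
      fderiv ℝ (fun z => fderiv ℝ f z ((1 : ℝ), (0 : Fin m → ℝ))) (0, 0)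
        ((0 : ℝ), Pi.single j 1) = 0 := by
  intro j
  have hWnhds : W ∈ 𝓝 (0, 0) := hW.mem_nhds h0W
  have hfd : ∀ᶠ z in 𝓝 (0, 0), HasFDerivAt f (fderiv ℝ f z) z :=
    eventually_of_mem hWnhds fun z hz =>
      (hf.contDiffAt (hW.mem_nhds hz)).differentiableAt (by simp) |>.hasFDerivAt
  have hf' : DifferentiableAt ℝ (fderiv ℝ f) (0, 0) :=
    ((hf.fderiv_of_isOpen (m := 1) hW (WithTop.coe_le_coe.2 le_top)).contDiffAt
      hWnhds).differentiableAt one_ne_zero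
  have hmin : IsLocalMinOn f {z | 0 ≤ z.1} (0, 0) :=
    mem_of_superset (inter_mem_nhdsWithin _ hWnhds) fun z ⟨hz, hzW⟩ => by
      simpa [hf0] using hnn z hzW hz
  set B := fderiv ℝ (fderiv ℝ f) (0, 0)
  have hB : ∀ v w, B v w = B w v := second_derivative_symmetric_of_eventually hfd hf'.hasFDerivAt
  rw [fderiv_clm_apply_const_apply hf'] at htt ⊢
  rw [hB]
  refine B.apply_eq_zero_of_forall_nonneg_add_smul hB htt fun c => ?_
  refine hmin.second_derivative_nonneg (eventually_nhdsWithin_of_forall fun t ht => ?_) hfd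
    hf'.hasFDerivAt (by simp [hgrad])
  simpa using le_of_lt ht

/-- Scaling lemma: if `f(t, y) ≥ 0` for `t ≥ 0` near the origin, `f` vanishes to first
order at the origin and `∂²f/∂t²(0,0) = 0`, then all the mixed derivatives
`∂²f/∂t∂yⱼ(0,0)` vanish. -/
theorem mixed_derivatives_vanish (m : ℕ) (hm : 1 ≤ m)
    (W : Set (ℝ × (Fin m → ℝ))) (hW : IsOpen W)
    (h0W : ((0 : ℝ), (0 : Fin m → ℝ)) ∈ W)
    (f : ℝ × (Fin m → ℝ) → ℝ) (hf : ContDiffOn ℝ (⊤ : ℕ∞) f W)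
    (hnn : ∀ z ∈ W, 0 ≤ z.1 → 0 ≤ f z)
    (hf0 : f (0, 0) = 0)
    (hgrad : fderiv ℝ f (0, 0) = 0)
    (htt : fderiv ℝ (fun z => fderiv ℝ f z ((1 : ℝ), (0 : Fin m → ℝ))) (0, 0)
        ((1 : ℝ), (0 : Fin m → ℝ)) = 0) :
    ∀ j : Fin m,
      fderiv ℝ (fun z => fderiv ℝ f z ((1 : ℝ), (0 : Fin m → ℝ))) (0, 0)
        ((0 : ℝ), Pi.single j 1) = 0 :=
  mixed_derivatives_vanish_general m W hW h0W f hf hnn hf0 hgrad htt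
end

section
/- (Glaeser's inequality.) Let f : ℝ → ℝ be twice continuously differentiable with f(s) ≥ 0 for all s ∈ ℝ, and suppose there is M ≥ 0 with |f''(s)| ≤ M for all s ∈ ℝ. Then f'(s)² ≤ 2M·f(s) for every s ∈ ℝ. -/
/-!
Since `M t² / 2 - f t` is convex, `f` lies below the parabola
`t ↦ f s + f' s · t + M t² / 2` tangent to it at `s`. As `f ≥ 0`, this quadratic in `t` is
nonnegative everywhere, so its discriminant `f'(s)² - 2 M f(s)` is nonpositive.
-/

open Set

theorem ConvexOn.add_deriv_mul_sub_le {S : Set ℝ} {g : ℝ → ℝ} (hg : ConvexOn ℝ S g) {x y : ℝ}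
    (hx : x ∈ S) (hy : y ∈ S) (hgx : DifferentiableAt ℝ g x) :
    g x + deriv g x * (y - x) ≤ g y := by
  rcases lt_trichotomy x y with hxy | rfl | hyx
  · have := hg.deriv_le_slope hx hy hxy hgx
    rw [slope_def_field, le_div_iff₀ (sub_pos.mpr hxy)] at this
    linarith
  · simp
  · have := hg.slope_le_deriv hy hx hyx hgx
    rw [slope_def_field, div_le_iff₀ (sub_pos.mpr hyx)] at this
    linarith

theorem le_add_deriv_mul_add_sq_of_deriv_deriv_le {f : ℝ → ℝ} {M : ℝ} (hf : Differentiable ℝ f)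
    (hf' : Differentiable ℝ (deriv f)) (hM : ∀ x, deriv (deriv f) x ≤ M) (x t : ℝ) :
    f (x + t) ≤ f x + deriv f x * t + M / 2 * t ^ 2 := by
  have hderiv : ∀ y, HasDerivAt (fun y => M / 2 * y ^ 2 - f y) (M * y - deriv f y) y := fun y => by
    refine (((hasDerivAt_pow 2 y).const_mul (M / 2)).fun_sub (hf y).hasDerivAt).congr_deriv ?_
    norm_num
    ring
  have hderiv2 : ∀ y, HasDerivAt (fun y => M * y - deriv f y) (M - deriv (deriv f) y) y := fun y => by
    simpa using ((hasDerivAt_id' y).const_mul M).fun_sub (hf' y).hasDerivAt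
  have hconvex : ConvexOn ℝ univ (fun y => M / 2 * y ^ 2 - f y) :=
    convexOn_of_hasDerivWithinAt2_nonneg convex_univ
      (fun y _ => (hderiv y).continuousAt.continuousWithinAt)
      (fun y _ => (hderiv y).hasDerivWithinAt) (fun y _ => (hderiv2 y).hasDerivWithinAt)
      (fun y _ => sub_nonneg.mpr (hM y))
  have := hconvex.add_deriv_mul_sub_le (mem_univ x) (mem_univ (x + t)) (hderiv x).differentiableAt
  rw [(hderiv x).deriv] at this
  linarith

theorem glaeser_inequality_general (f : ℝ → ℝ) (hf : ContDiff ℝ 2 f)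
    (hnonneg : ∀ s : ℝ, 0 ≤ f s) (M : ℝ)
    (hbound : ∀ s : ℝ, |deriv (deriv f) s| ≤ M) :
    ∀ s : ℝ, (deriv f s) ^ 2 ≤ 2 * M * f s := by
  intro s
  have hquadratic : ∀ t, 0 ≤ M / 2 * (t * t) + deriv f s * t + f s := fun t => by
    have := le_add_deriv_mul_add_sq_of_deriv_deriv_le (hf.differentiable two_ne_zero)
      hf.differentiable_deriv_two (fun x => (le_abs_self _).trans (hbound x)) s t
    nlinarith [hnonneg (s + t)]
  have := discrim_le_zero hquadratic
  rw [discrim] at this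
  linarith

/-- **Glaeser's inequality.** If `f : ℝ → ℝ` is twice continuously differentiable,
nonnegative everywhere, and its second derivative is bounded in absolute value by `M ≥ 0`,
then `(f' s)² ≤ 2 M f s` for every `s`. -/
theorem glaeser_inequality (f : ℝ → ℝ) (hf : ContDiff ℝ 2 f)
    (hnonneg : ∀ s : ℝ, 0 ≤ f s) (M : ℝ) (hM : 0 ≤ M)
    (hbound : ∀ s : ℝ, |deriv (deriv f) s| ≤ M) :
    ∀ s : ℝ, (deriv f s) ^ 2 ≤ 2 * M * f s :=
  glaeser_inequality_general f hf hnonneg M hbound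
end

section
/- Let p ≥ 1 and let q₁,…,q_p and r₁,…,r_p be positive real numbers. On ℝ^{p+1} × ℝ^{p+1} with coordinates (x₀,x₁,…,x_p; ξ₀,ξ₁,…,ξ_p), consider the quadratic form Q(x,ξ) = −ξ₀² + Σ_{i=1}^p q_i·(x_{i−1} − x_i)² + Σ_{i=1}^p r_i·ξ_i², and let F = J·H be the 2(p+1) × 2(p+1) real matrix where H is the Hessian matrix of Q (the constant matrix of its second partial derivatives in (x,ξ)) and J = [[0, I_{p+1}],[−I_{p+1}, 0]]. Then the characteristic polynomial satisfies det(λ·I + F) = λ²·ψ(λ) for a polynomial ψ of degree 2p with ψ(0) = −(∏_{j=1}^p 4q_j)·(∏_{j=1}^p r_j)·(Σ_{j=1}^p r_j^{−1} − 1). -/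
/-!
The Hessian is block diagonal, `H = diag(A, B)` with `A = M D Mᵀ`, where `M` is the incidence
matrix of the path `0 — 1 — ⋯ — p` and `D = diag(2qᵢ)`, and `B = diag(-2, 2r₁, …, 2r_p)`.
So `det(λ + JH)` is the characteristic polynomial of `-JH = [[0, -B], [A, 0]]`, which is
`χ_{-BA}(λ²)`. Commuting the rectangular factors of `-BA = (-BMD) Mᵀ` gives
`χ_{-BA}(μ) = μ · χ_{-W}(μ)` with `W = MᵀBMD`, hence `ψ(λ) = χ_{-W}(λ²)` and
`ψ(0) = det W = det(MᵀBM) · ∏ 2qⱼ`. Replacing `M` by `MS`, with `S` the upper unitriangular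
matrix of ones, turns `MᵀBM` into `diag(2rᵢ) - 2·𝟙𝟙ᵀ`, whose determinant `(∏ 2rᵢ)(1 - ∑ rᵢ⁻¹)`
is given by the matrix determinant lemma.
-/

open Matrix Polynomial Finset

namespace Matrix

variable {R : Type*} [CommRing R] {n : Type*} [Fintype n]

theorem IsSymm.eq_zero_of_dotProduct_mulVec_self [DecidableEq n] [IsAddTorsionFree R]
    {G : Matrix n n R} (hG : G.IsSymm) (h : ∀ w, w ⬝ᵥ G *ᵥ w = 0) : G = 0 := by
  have entry (i j : n) : Pi.single i 1 ⬝ᵥ G *ᵥ Pi.single j 1 = G i j := by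
    rw [mulVec_single_one, single_one_dotProduct]; rfl
  have diag_zero (i : n) : G i i = 0 := entry i i ▸ h _
  ext i j
  have hpolar := h (Pi.single i 1 + Pi.single j 1)
  simp only [mulVec_add, dotProduct_add, add_dotProduct, entry, diag_zero, hG.apply i j, zero_add,
    add_zero] at hpolar
  rw [zero_apply, ← nsmul_right_inj two_ne_zero, two_nsmul, nsmul_zero]
  exact hpolar

theorem IsSymm.ext_of_dotProduct_mulVec_self [DecidableEq n] [IsAddTorsionFree R]
    {M N : Matrix n n R} (hM : M.IsSymm) (hN : N.IsSymm)
    (h : ∀ w, w ⬝ᵥ M *ᵥ w = w ⬝ᵥ N *ᵥ w) : M = N :=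
  sub_eq_zero.mp <| (hM.sub hN).eq_zero_of_dotProduct_mulVec_self fun w => by
    rw [sub_mulVec, dotProduct_sub, h, sub_self]

theorem dotProduct_diagonal_mulVec_self [DecidableEq n] (d x : n → R) :
    x ⬝ᵥ diagonal d *ᵥ x = ∑ i, d i * x i ^ 2 := by
  simp only [mulVec_diagonal, dotProduct]
  exact sum_congr rfl fun i _ => by ring

theorem dotProduct_mulVec_mul_diagonal_mul_transpose {m : Type*} [Fintype m] [DecidableEq m]
    (P : Matrix n m R) (d : m → R) (x : n → R) :
    x ⬝ᵥ (P * diagonal d * Pᵀ) *ᵥ x = ∑ i, d i * (x ᵥ* P) i ^ 2 := by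
  rw [← mulVec_mulVec, ← mulVec_mulVec, dotProduct_mulVec, mulVec_transpose,
    dotProduct_diagonal_mulVec_self]

theorem det_smul_one_add_eq_eval_charpoly_neg [DecidableEq n] (M : Matrix n n R) (t : R) :
    (t • (1 : Matrix n n R) + M).det = (-M).charpoly.eval t := by
  rw [eval_charpoly, scalar_apply, smul_one_eq_diagonal, sub_neg_eq_add]

theorem charpoly_comp_X_sq [DecidableEq n] (M : Matrix n n R) :
    M.charpoly.comp (X ^ 2) = (scalar n (X ^ 2 : R[X]) - M.map C).det := by
  rw [charpoly, ← coe_compRingHom_apply, RingHom.map_det]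
  congr 1
  ext i j
  by_cases h : i = j <;> simp [h, compRingHom]

theorem charpoly_fromBlocks_zero₁₁_zero₂₂ [DecidableEq n] (A B : Matrix n n R) :
    (fromBlocks 0 A B 0).charpoly = (A * B).charpoly.comp (X ^ 2) := by
  have hfactor : charmatrix (fromBlocks 0 A B 0) * fromBlocks (scalar n X) 0 (B.map C) 1
      = fromBlocks (scalar n (X ^ 2) - (A * B).map C) (-A.map C) 0 (scalar n X) := by
    rw [charmatrix_fromBlocks, fromBlocks_multiply]
    simp only [charmatrix_zero, scalar_apply, diagonal_mul_diagonal, neg_mul, mul_zero, mul_one,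
      zero_add, pow_two, Matrix.map_mul, sub_eq_add_neg, fromBlocks_inj, neg_add_eq_zero, and_true,
      true_and]
    exact (scalar_commute (n := n) (X : R[X]) (Commute.all X) (B.map C)).eq.symm
  have hdet := congrArg det hfactor
  rw [det_mul, det_fromBlocks_zero₁₂, det_fromBlocks_zero₂₁, det_one, mul_one] at hdet
  rw [charpoly_comp_X_sq, ← (isRegular_X_pow (R := R) (Fintype.card n)).right.eq_iff]
  simpa [charpoly, scalar_apply] using hdet

theorem det_diagonal_add_const {K : Type*} [Field K] [DecidableEq n]
    {e : n → K} (he : ∀ i, e i ≠ 0) (c : K) :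
    (diagonal e + of fun _ _ => c).det = (∏ i, e i) * (1 + c * ∑ i, (e i)⁻¹) := by
  have hfactor : diagonal e + of (fun _ _ => c)
      = diagonal e * (1 + vecMulVec (fun i => (e i)⁻¹ * c) 1) := by
    ext i j
    by_cases hij : i = j <;> simp [diagonal_mul, hij, mul_add, he]
  rw [hfactor, det_mul, det_diagonal, vecMulVec_eq Unit, det_one_add_replicateCol_mul_replicateRow,
    one_dotProduct, ← sum_mul, mul_comm (∑ i, (e i)⁻¹)]

end Matrix

section Path

variable (R : Type*) [CommRing R]

def pathIncidence (p : ℕ) : Matrix (Fin (p + 1)) (Fin p) R :=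
  of fun k i => (Pi.single i.castSucc 1 - Pi.single i.succ 1 : Fin (p + 1) → R) k

def upperOnes (p : ℕ) : Matrix (Fin p) (Fin p) R :=
  of fun j i => if j ≤ i then 1 else 0

variable {R}

theorem vecMul_pathIncidence {p : ℕ} (x : Fin (p + 1) → R) (i : Fin p) :
    (x ᵥ* pathIncidence R p) i = x i.castSucc - x i.succ := by
  simp only [vecMul, pathIncidence, of_apply, dotProduct_sub, dotProduct_single, mul_one]

theorem det_upperOnes (p : ℕ) : (upperOnes R p).det = 1 := by
  rw [det_of_isUpperTriangular (M := upperOnes R p) fun i j (h : j < i) => if_neg (not_le.mpr h)]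
  simp [upperOnes]

theorem pathIncidence_mul_upperOnes (p : ℕ) :
    pathIncidence R p * upperOnes R p
      = of fun k i => (Pi.single 0 1 - Pi.single i.succ 1 : Fin (p + 1) → R) k := by
  ext k i
  let g : ℕ → R := fun n => if (k : ℕ) = n then 1 else 0
  have hcol (j : Fin p) : pathIncidence R p k j = g j - g (j + 1) := by
    simp [pathIncidence, g, Pi.single_apply, Fin.ext_iff]
  calc (pathIncidence R p * upperOnes R p) k i
      = ∑ j ∈ Iic i, (g j - g (j + 1)) := by
        simp only [mul_apply, upperOnes, of_apply, hcol, mul_ite, mul_one, mul_zero,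
          ← sum_filter, filter_ge_eq_Iic]
    _ = ∑ j ∈ range (i + 1), (g j - g (j + 1)) := by
        rw [Nat.range_succ_eq_Iic, ← Fin.map_valEmbedding_Iic, sum_map]; rfl
    _ = _ := by
        simp only [sum_range_sub', g, of_apply, Pi.sub_apply, Pi.single_apply, Fin.ext_iff,
          Fin.val_zero, Fin.val_succ]

theorem det_pathIncidence_transpose_mul_diagonal_mul (p : ℕ) (d : Fin (p + 1) → R) :
    ((pathIncidence R p)ᵀ * diagonal d * pathIncidence R p).det
      = (diagonal (fun i : Fin p => d i.succ) + of fun _ _ => d 0).det := by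
  set N := pathIncidence R p * upperOnes R p with hN
  have hNdN : Nᵀ * diagonal d * N = diagonal (fun i : Fin p => d i.succ) + of fun _ _ => d 0 := by
    rw [hN, pathIncidence_mul_upperOnes]
    ext i j
    by_cases hij : i = j <;>
      simp [mul_apply, Fin.sum_univ_succ, Pi.single_apply, diagonal_apply, hij, eq_comm, add_comm]
  calc ((pathIncidence R p)ᵀ * diagonal d * pathIncidence R p).det
      = ((upperOnes R p)ᵀ * ((pathIncidence R p)ᵀ * diagonal d * pathIncidence R p)
          * upperOnes R p).det := by
        rw [det_mul, det_mul, det_transpose, det_upperOnes, one_mul, mul_one]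
    _ = (Nᵀ * diagonal d * N).det := by
        rw [hN, transpose_mul]; simp only [Matrix.mul_assoc]
    _ = _ := by rw [hNdN]

end Path

section ChainForm

variable {R : Type*} [CommRing R] {p : ℕ}

def chainHessianX (q : Fin p → R) : Matrix (Fin (p + 1)) (Fin (p + 1)) R :=
  pathIncidence R p * diagonal (fun i => 2 * q i) * (pathIncidence R p)ᵀ

def chainHessianXi (r : Fin p → R) : Matrix (Fin (p + 1)) (Fin (p + 1)) R :=
  diagonal (Fin.cons (-2) fun i => 2 * r i)

def chainHessian (q r : Fin p → R) :
    Matrix (Fin (p + 1) ⊕ Fin (p + 1)) (Fin (p + 1) ⊕ Fin (p + 1)) R :=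
  fromBlocks (chainHessianX q) 0 0 (chainHessianXi r)

def chainReducedMatrix (q r : Fin p → R) : Matrix (Fin p) (Fin p) R :=
  (pathIncidence R p)ᵀ * chainHessianXi r * pathIncidence R p * diagonal (fun i => 2 * q i)

theorem isSymm_chainHessian (q r : Fin p → R) : (chainHessian q r).IsSymm :=
  IsSymm.fromBlocks (by simp [chainHessianX, IsSymm, transpose_mul, Matrix.mul_assoc]) (by simp)
    (isSymm_diagonal _)

theorem dotProduct_chainHessian_mulVec (q r : Fin p → R) (x ξ : Fin (p + 1) → R) :
    Sum.elim x ξ ⬝ᵥ chainHessian q r *ᵥ Sum.elim x ξ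
      = 2 * (-(ξ 0) ^ 2 + (∑ i : Fin p, q i * (x i.castSucc - x i.succ) ^ 2)
          + ∑ i : Fin p, r i * (ξ i.succ) ^ 2) := by
  rw [chainHessian, chainHessianX, chainHessianXi, fromBlocks_mulVec, sumElim_dotProduct_sumElim]
  simp only [Sum.elim_comp_inl, Sum.elim_comp_inr, zero_mulVec, add_zero, zero_add,
    dotProduct_mulVec_mul_diagonal_mul_transpose, vecMul_pathIncidence,
    dotProduct_diagonal_mulVec_self, Fin.sum_univ_succ, Fin.cons_zero, Fin.cons_succ, mul_add,
    mul_sum]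
  ring_nf

theorem charpoly_neg_fromBlocks_mul_chainHessian (q r : Fin p → R) :
    (-(fromBlocks 0 1 (-1) 0 * chainHessian q r :
        Matrix (Fin (p + 1) ⊕ Fin (p + 1)) _ R)).charpoly
      = X ^ 2 * (-chainReducedMatrix q r).charpoly.comp (X ^ 2) := by
  have hblocks :
      -(fromBlocks 0 1 (-1) 0 * chainHessian q r : Matrix (Fin (p + 1) ⊕ Fin (p + 1)) _ R)
        = fromBlocks 0 (-chainHessianXi r) (chainHessianX q) 0 := by
    simp [chainHessian, fromBlocks_multiply, fromBlocks_neg]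
  have hfactor : -chainHessianXi r * chainHessianX q
      = -(chainHessianXi r * pathIncidence R p * diagonal fun i => 2 * q i)
          * (pathIncidence R p)ᵀ := by
    simp only [chainHessianX, Matrix.neg_mul, Matrix.mul_assoc]
  rw [hblocks, charpoly_fromBlocks_zero₁₁_zero₂₂, hfactor, charpoly_mul_comm_of_le _ _ (by simp),
    Matrix.mul_neg, chainReducedMatrix]
  simp [Matrix.mul_assoc, mul_comp]

theorem det_chainReducedMatrix {K : Type*} [Field K] [NeZero (2 : K)] (q r : Fin p → K)
    (hr : ∀ i, r i ≠ 0) :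
    (chainReducedMatrix q r).det
      = -((∏ j, 4 * q j) * (∏ j, r j) * ((∑ j, (r j)⁻¹) - 1)) := by
  have h2r (i : Fin p) : 2 * r i ≠ 0 := mul_ne_zero two_ne_zero (hr i)
  rw [chainReducedMatrix, chainHessianXi, det_mul, det_pathIncidence_transpose_mul_diagonal_mul]
  simp only [Fin.cons_succ, Fin.cons_zero]
  rw [det_diagonal_add_const h2r, det_diagonal]
  simp only [prod_mul_distrib, prod_const, card_univ, Fintype.card_fin, mul_inv, ← mul_sum]
  rw [show (4 : K) ^ p = 2 ^ p * 2 ^ p by rw [← mul_pow]; norm_num]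
  field_simp
  ring

end ChainForm

theorem det_hamilton_map_factorization_general (p : ℕ) (q r : Fin p → ℝ)
    (hr : ∀ i, 0 < r i)
    (H : Matrix (Fin (p + 1) ⊕ Fin (p + 1)) (Fin (p + 1) ⊕ Fin (p + 1)) ℝ)
    (hHsymm : H.IsSymm)
    (hH : ∀ x ξ : Fin (p + 1) → ℝ,
      -(ξ 0) ^ 2 + (∑ i : Fin p, q i * (x i.castSucc - x i.succ) ^ 2)
          + ∑ i : Fin p, r i * (ξ i.succ) ^ 2
        = (1 / 2) * (Sum.elim x ξ ⬝ᵥ H.mulVec (Sum.elim x ξ))) :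
    ∃ ψ : Polynomial ℝ, ψ.natDegree = 2 * p ∧
      (∀ lam : ℝ,
        (lam • (1 : Matrix (Fin (p + 1) ⊕ Fin (p + 1)) (Fin (p + 1) ⊕ Fin (p + 1)) ℝ)
            + Matrix.fromBlocks 0 1 (-1) 0 * H).det = lam ^ 2 * ψ.eval lam) ∧
      ψ.eval 0
        = -((∏ j : Fin p, 4 * q j) * (∏ j : Fin p, r j) * ((∑ j : Fin p, (r j)⁻¹) - 1)) := by
  have hH₀ : H = chainHessian q r :=
    hHsymm.ext_of_dotProduct_mulVec_self (isSymm_chainHessian q r) fun w => by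
      obtain ⟨x, ξ, rfl⟩ : ∃ x ξ, w = Sum.elim x ξ := ⟨_, _, (Sum.elim_comp_inl_inr w).symm⟩
      rw [dotProduct_chainHessian_mulVec, hH]
      ring
  refine ⟨(-chainReducedMatrix q r).charpoly.comp (X ^ 2), ?_, fun lam => ?_, ?_⟩
  · rw [natDegree_comp, charpoly_natDegree_eq_dim, natDegree_X_pow, Fintype.card_fin, mul_comm]
  · rw [det_smul_one_add_eq_eval_charpoly_neg, hH₀, charpoly_neg_fromBlocks_mul_chainHessian,
      eval_mul, eval_pow, eval_X]
  · rw [eval_comp, eval_pow, eval_X, zero_pow two_ne_zero, ← det_smul_one_add_eq_eval_charpoly_neg,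
      zero_smul, zero_add, det_chainReducedMatrix q r fun i => (hr i).ne']

/-- For the hyperbolic quadratic form
`Q(x, ξ) = -ξ₀² + Σ qᵢ (x_{i-1} - x_i)² + Σ rᵢ ξᵢ²` on `ℝ^{p+1} × ℝ^{p+1}` with Hessian
matrix `H` (the symmetric matrix with `Q v = (1/2) ⟨v, H v⟩`) and `F = J H`,
one has `det(λ I + F) = λ² ψ(λ)` for a polynomial `ψ` of degree `2p` with
`ψ(0) = -(∏ 4 qⱼ)(∏ rⱼ)(Σ rⱼ⁻¹ - 1)`. -/
theorem det_hamilton_map_factorization (p : ℕ) (hp : 1 ≤ p) (q r : Fin p → ℝ)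
    (hq : ∀ i, 0 < q i) (hr : ∀ i, 0 < r i)
    (H : Matrix (Fin (p + 1) ⊕ Fin (p + 1)) (Fin (p + 1) ⊕ Fin (p + 1)) ℝ)
    (hHsymm : H.IsSymm)
    (hH : ∀ x ξ : Fin (p + 1) → ℝ,
      -(ξ 0) ^ 2 + (∑ i : Fin p, q i * (x i.castSucc - x i.succ) ^ 2)
          + ∑ i : Fin p, r i * (ξ i.succ) ^ 2
        = (1 / 2) * (Sum.elim x ξ ⬝ᵥ H.mulVec (Sum.elim x ξ))) :
    ∃ ψ : Polynomial ℝ, ψ.natDegree = 2 * p ∧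
      (∀ lam : ℝ,
        (lam • (1 : Matrix (Fin (p + 1) ⊕ Fin (p + 1)) (Fin (p + 1) ⊕ Fin (p + 1)) ℝ)
            + Matrix.fromBlocks 0 1 (-1) 0 * H).det = lam ^ 2 * ψ.eval lam) ∧
      ψ.eval 0
        = -((∏ j : Fin p, 4 * q j) * (∏ j : Fin p, r j) * ((∑ j : Fin p, (r j)⁻¹) - 1)) :=
  det_hamilton_map_factorization_general p q r hr H hHsymm hH
end
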